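/- arXiv:2605.13499 — 3 statements merged into one kernel-verified Lean document; each statement's English description precedes it below -/
import Mathlib

section
/- Let $t > 0$, let $I$ and $J \notin I$ be index labels, $A \subseteq I$ nonempty with complement $A^c = I \setminus A$, and let $\gamma_j$ for $j \in I \cup \{J\}$ lie in a compact set $D \subset \mathbb{C}$. Then for any closed contour $\Gamma_D$ winding once anticlockwise around $D$: $\int_{(\mathbb{R}_+)^I} ds\, \delta\big(t - \sum_{j\in I} s_j\big) \prod_{j\in I} e^{-i\gamma_j s_j} = -\oint_{\Gamma_D} \frac{dz}{2\pi} \Big[\int_{(\mathbb{R}_+)^{A^c\cup\{J\}}} ds\, \delta\big(t - \sum_j s_j\big) \prod_{j\in A^c\cup\{J\}} e^{-i\gamma_j s_j}\Big]\Big|_{\gamma_J = z} \prod_{j\in A} \frac{i}{z - \gamma_j}$. -/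
/-!
Write `phaseIntegral τ γ₀ γ` for the time-simplex integral in which the integrated-out
variable carries the phase `γ₀`. Splitting the labels as `A ⊔ Aᶜ`, the integral over `I` is a
convolution in time of the integral over `Aᶜ` with the one over `A`.

The key identity is that, for phases `γ₀, γⱼ` inside the contour,
`-(1/2π) ∮ e^{-izτ} i/(z-γ₀) ∏ⱼ i/(z-γⱼ) dz = phaseIntegral τ γ₀ γ`.
With no `γⱼ` this is Cauchy's formula. Adding a resolvent `i/(z-δ)` convolves with `e^{-iδu}`,
since `∫₀^τ e^{-iδu} e^{-iz(τ-u)} du = (e^{-izτ} - e^{-iδτ}) i/(z-δ)`, and the term `e^{-iδτ}`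
drops out: a product of at least two resolvents decays like `|z|⁻²`, so its contour integral
vanishes. Exchanging the contour integral with the simplex integral over `Aᶜ` gives the theorem.
-/

open MeasureTheory Complex
open scoped Real

/-- The time-simplex integral `∫_{(ℝ₊)^ι} ds δ(t - Σⱼ sⱼ) Πⱼ e^{-iγⱼsⱼ}`, defined by
integrating out the variable with label `i0` via the delta constraint. -/
noncomputable def simplexIntegral {ι : Type} [Fintype ι] [DecidableEq ι]
    (i0 : ι) (t : ℝ) (γ : ι → ℂ) : ℂ :=
  ∫ s in {s : {i : ι // i ≠ i0} → ℝ | (∀ i, 0 ≤ s i) ∧ ∑ i, s i ≤ t},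
    (∏ i : {i : ι // i ≠ i0}, Complex.exp (-(I * γ i.val * (s i : ℂ)))) *
      Complex.exp (-(I * γ i0 * ((t - ∑ i, s i : ℝ) : ℂ)))

open Metric

section TimeSimplex

variable {κ κ' : Type*} [Fintype κ] [Fintype κ']

def timeSimplex (κ : Type*) [Fintype κ] (t : ℝ) : Set (κ → ℝ) :=
  {s | (∀ i, 0 ≤ s i) ∧ ∑ i, s i ≤ t}

noncomputable def phaseIntegrand (t : ℝ) (γ0 : ℂ) (γ : κ → ℂ) (s : κ → ℝ) : ℂ :=
  (∏ i, exp (-(I * γ i * (s i : ℂ)))) * exp (-(I * γ0 * ((t - ∑ i, s i : ℝ) : ℂ)))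

noncomputable def phaseIntegral (t : ℝ) (γ0 : ℂ) (γ : κ → ℂ) : ℂ :=
  ∫ s in timeSimplex κ t, phaseIntegrand t γ0 γ s

lemma timeSimplex_subset_pi_Icc (t : ℝ) :
    timeSimplex κ t ⊆ Set.univ.pi fun _ => Set.Icc 0 t :=
  fun _ ⟨hs, hsum⟩ i _ =>
    ⟨hs i, (Finset.single_le_sum (fun j _ => hs j) (Finset.mem_univ i)).trans hsum⟩

lemma isClosed_timeSimplex (t : ℝ) : IsClosed (timeSimplex κ t) := by
  simp only [timeSimplex, Set.ofPred_and, Set.ofPred_forall]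
  exact (isClosed_iInter fun i => isClosed_le continuous_const (continuous_apply i)).inter
    (isClosed_le (by fun_prop) continuous_const)

lemma isCompact_timeSimplex (t : ℝ) : IsCompact (timeSimplex κ t) :=
  (isCompact_univ_pi fun _ => isCompact_Icc).of_isClosed_subset (isClosed_timeSimplex t)
    (timeSimplex_subset_pi_Icc t)

lemma measurableSet_timeSimplex (t : ℝ) : MeasurableSet (timeSimplex κ t) :=
  (isClosed_timeSimplex t).measurableSet

lemma continuous_phaseIntegrand (t : ℝ) (γ0 : ℂ) (γ : κ → ℂ) :
    Continuous (phaseIntegrand t γ0 γ) := by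
  unfold phaseIntegrand
  fun_prop

lemma integrable_indicator_phaseIntegrand (t : ℝ) (γ0 : ℂ) (γ : κ → ℂ) :
    Integrable ((timeSimplex κ t).indicator (phaseIntegrand t γ0 γ)) :=
  (integrable_indicator_iff (measurableSet_timeSimplex t)).2 <|
    (continuous_phaseIntegrand t γ0 γ).continuousOn.integrableOn_compact (isCompact_timeSimplex t)

lemma phaseIntegral_comp_equiv (e : κ' ≃ κ) (t : ℝ) (γ0 : ℂ) (γ : κ → ℂ) :
    phaseIntegral t γ0 (γ ∘ e) = phaseIntegral t γ0 γ := by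
  let Φ := MeasurableEquiv.arrowCongr' e (MeasurableEquiv.refl ℝ)
  have hΦ : MeasurePreserving Φ :=
    volume_preserving_arrowCongr' e _ (MeasurePreserving.id volume)
  have happ (x : κ' → ℝ) (j : κ') : Φ x (e j) = x j := by
    simp [Φ, MeasurableEquiv.arrowCongr', Equiv.arrowCongr']
  have hsum (x : κ' → ℝ) : ∑ i, Φ x i = ∑ j, x j := by
    simp only [← e.sum_comp, happ]
  have hpre : Φ ⁻¹' timeSimplex κ t = timeSimplex κ' t := by
    ext x
    simp only [Set.mem_preimage, timeSimplex, Set.mem_ofPred_eq, hsum, Equiv.symm_symm, happ,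
      e.symm.forall_congr_left (p := fun i => 0 ≤ Φ x i)]
  rw [phaseIntegral, phaseIntegral, ← hΦ.setIntegral_preimage_emb Φ.measurableEmbedding, hpre]
  refine setIntegral_congr_fun (measurableSet_timeSimplex t) fun x _ => ?_
  simp only [phaseIntegrand, hsum, ← e.prod_comp, happ, Function.comp_apply]

lemma phaseIntegral_of_isEmpty [IsEmpty κ] {t : ℝ} (ht : 0 ≤ t) (γ0 : ℂ) (γ : κ → ℂ) :
    phaseIntegral t γ0 γ = exp (-(I * γ0 * t)) := by
  have hS : timeSimplex κ t = Set.univ := by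
    ext s
    simp [timeSimplex, ht]
  simp [phaseIntegral, phaseIntegrand, hS, measureReal_def, volume_pi]

section Split

variable {κ₁ κ₂ : Type*} [Fintype κ₁] [Fintype κ₂]

lemma indicator_phaseIntegrand_sum_elim (t : ℝ) (γ0 : ℂ) (γ1 : κ₁ → ℂ) (γ2 : κ₂ → ℂ)
    (u : κ₁ → ℝ) (v : κ₂ → ℝ) :
    (timeSimplex (κ₁ ⊕ κ₂) t).indicator (phaseIntegrand t γ0 (Sum.elim γ1 γ2))
        ((MeasurableEquiv.sumPiEquivProdPi fun _ : κ₁ ⊕ κ₂ => ℝ).symm (u, v)) =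
      (timeSimplex κ₂ t).indicator (fun v => (∏ i, exp (-(I * γ2 i * (v i : ℂ)))) *
        (timeSimplex κ₁ (t - ∑ i, v i)).indicator (phaseIntegrand (t - ∑ i, v i) γ0 γ1) u) v := by
  set w := (MeasurableEquiv.sumPiEquivProdPi fun _ : κ₁ ⊕ κ₂ => ℝ).symm (u, v)
  have hl (i : κ₁) : w (Sum.inl i) = u i := rfl
  have hr (i : κ₂) : w (Sum.inr i) = v i := rfl
  have hmem : w ∈ timeSimplex (κ₁ ⊕ κ₂) t ↔
      v ∈ timeSimplex κ₂ t ∧ u ∈ timeSimplex κ₁ (t - ∑ i, v i) := by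
    simp only [timeSimplex, Set.mem_ofPred_eq, Sum.forall, Fintype.sum_sum_type, hl, hr]
    constructor
    · rintro ⟨⟨hu, hv⟩, hsum⟩
      have := Finset.sum_nonneg fun i (_ : i ∈ Finset.univ) => hu i
      exact ⟨⟨hv, by linarith⟩, hu, by linarith⟩
    · rintro ⟨⟨hv, -⟩, hu, hsum⟩
      exact ⟨⟨hu, hv⟩, by linarith⟩
  have hval : phaseIntegrand t γ0 (Sum.elim γ1 γ2) w =
      (∏ i, exp (-(I * γ2 i * (v i : ℂ)))) * phaseIntegrand (t - ∑ i, v i) γ0 γ1 u := by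
    simp only [phaseIntegrand, Fintype.prod_sum_type, Fintype.sum_sum_type, hl, hr,
      Sum.elim_inl, Sum.elim_inr, sub_add_eq_sub_sub_swap]
    ring
  by_cases hv : v ∈ timeSimplex κ₂ t <;> by_cases hu : u ∈ timeSimplex κ₁ (t - ∑ i, v i) <;>
    simp [hmem, hval, hu, hv]

lemma phaseIntegral_sum_elim (t : ℝ) (γ0 : ℂ) (γ1 : κ₁ → ℂ) (γ2 : κ₂ → ℂ) :
    phaseIntegral t γ0 (Sum.elim γ1 γ2) = ∫ v in timeSimplex κ₂ t,
      (∏ i, exp (-(I * γ2 i * (v i : ℂ)))) * phaseIntegral (t - ∑ i, v i) γ0 γ1 := by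
  let φ := (MeasurableEquiv.sumPiEquivProdPi fun _ : κ₁ ⊕ κ₂ => ℝ).symm
  have hφ : MeasurePreserving φ (volume.prod volume) volume :=
    (volume_measurePreserving_sumPiEquivProdPi _).symm
  set F := (timeSimplex (κ₁ ⊕ κ₂) t).indicator (phaseIntegrand t γ0 (Sum.elim γ1 γ2))
  have hF : Integrable (F ∘ φ) (volume.prod volume) :=
    (hφ.integrable_comp_emb φ.measurableEmbedding).2 (integrable_indicator_phaseIntegrand ..)
  calc phaseIntegral t γ0 (Sum.elim γ1 γ2)
      = ∫ p, F (φ p) ∂(volume.prod volume) := by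
        rw [hφ.integral_comp', phaseIntegral, integral_indicator (measurableSet_timeSimplex t)]
    _ = ∫ v, ∫ u, F (φ (u, v)) := integral_prod_symm _ hF
    _ = ∫ v, (timeSimplex κ₂ t).indicator (fun v => (∏ i, exp (-(I * γ2 i * (v i : ℂ)))) *
          phaseIntegral (t - ∑ i, v i) γ0 γ1) v := by
        congr 1 with v
        simp only [F, φ, indicator_phaseIntegrand_sum_elim]
        by_cases hv : v ∈ timeSimplex κ₂ t
        · simp only [Set.indicator_of_mem hv, integral_const_mul, phaseIntegral,
            integral_indicator (measurableSet_timeSimplex _)]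
        · simp only [Set.indicator_of_notMem hv, integral_zero]
    _ = _ := integral_indicator (measurableSet_timeSimplex t)

end Split

lemma setIntegral_timeSimplex_unique {ι E : Type*} [Unique ι] [NormedAddCommGroup E]
    [NormedSpace ℝ E] (t : ℝ) (g : (ι → ℝ) → E) :
    ∫ v in timeSimplex ι t, g v = ∫ u in Set.Icc 0 t, g (fun _ => u) := by
  have hψ := volume_preserving_funUnique ι ℝ
  have hpre : (MeasurableEquiv.funUnique ι ℝ).symm ⁻¹' timeSimplex ι t = Set.Icc 0 t := by
    ext u
    simp [timeSimplex, MeasurableEquiv.funUnique]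
  rw [← hψ.symm.setIntegral_preimage_emb (MeasurableEquiv.funUnique ι ℝ).symm.measurableEmbedding,
    hpre]
  rfl

lemma phaseIntegral_option (t : ℝ) (γ0 : ℂ) (γ : Option κ → ℂ) :
    phaseIntegral t γ0 γ = ∫ u in Set.Icc 0 t,
      exp (-(I * γ none * (u : ℂ))) * phaseIntegral (t - u) γ0 (γ ∘ some) := by
  have hγ : Sum.elim (γ ∘ some) (fun _ : Unit => γ none) ∘ Equiv.optionEquivSumPUnit.{0} κ = γ := by
    ext (_ | _) <;> rfl
  conv_lhs => rw [← hγ, phaseIntegral_comp_equiv, phaseIntegral_sum_elim,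
    setIntegral_timeSimplex_unique]
  simp

end TimeSimplex

lemma simplexIntegral_none {κ : Type} [Fintype κ] [DecidableEq κ] (t : ℝ) (γ : Option κ → ℂ) :
    simplexIntegral none t γ = phaseIntegral t (γ none) (γ ∘ some) := by
  let e : κ ≃ {o : Option κ // o ≠ none} := (Equiv.optionIsSomeEquiv κ).symm.trans
    (Equiv.subtypeEquivRight fun _ => Option.ne_none_iff_isSome.symm)
  exact (phaseIntegral_comp_equiv e t _ _).symm

lemma simplexIntegral_sum_inl {α β : Type} [Fintype α] [Fintype β] [DecidableEq α]
    [DecidableEq β] (a0 : α) (t : ℝ) (γ1 : α → ℂ) (γ2 : β → ℂ) :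
    simplexIntegral (Sum.inl a0) t (Sum.elim γ1 γ2) =
      phaseIntegral t (γ1 a0) (Sum.elim (fun a : {a // a ≠ a0} => γ1 a) γ2) := by
  let e : {a // a ≠ a0} ⊕ β ≃ {i : α ⊕ β // i ≠ Sum.inl a0} :=
    (Equiv.sumCongr (Equiv.subtypeEquivRight fun _ => Sum.inl_injective.ne_iff.symm)
      (Equiv.subtypeUnivEquiv (p := fun b : β => Sum.inr b ≠ Sum.inl a0)
        fun _ => Sum.inr_ne_inl).symm).trans (Equiv.subtypeSum (p := (· ≠ Sum.inl a0))).symm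
  have he : (fun i : {i : α ⊕ β // i ≠ Sum.inl a0} => Sum.elim γ1 γ2 i) ∘ e =
      Sum.elim (fun a : {a // a ≠ a0} => γ1 a) γ2 := by
    ext (_ | _) <;> rfl
  rw [← he]
  exact (phaseIntegral_comp_equiv e t _ _).symm

section Contour

variable {c : ℂ} {R : ℝ}

open Filter Topology in
lemma circleIntegral_eq_zero_of_norm_le_div_sq {E : Type*} [NormedAddCommGroup E]
    [NormedSpace ℂ E] [CompleteSpace E] {f : ℂ → E} {R₀ C : ℝ} (hR : 0 < R)
    (hf : ∀ z, R ≤ dist z c → DifferentiableAt ℂ f z)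
    (hbound : ∀ z, R₀ ≤ dist z c → ‖f z‖ ≤ C / dist z c ^ 2) :
    (∮ z in C(c, R), f z) = 0 := by
  have hle (r : ℝ) (hr : max R R₀ ≤ r) : ‖∮ z in C(c, R), f z‖ ≤ 2 * π * C / r := by
    have hRr : R ≤ r := (le_max_left _ _).trans hr
    have hr0 : 0 < r := hR.trans_le hRr
    rw [← circleIntegral_eq_of_differentiable_on_annulus_off_countable hR hRr
      Set.countable_empty
      (fun z hz => (hf z (not_lt.1 hz.2)).continuousAt.continuousWithinAt)
      (fun z hz => hf z (not_le.1 hz.1.2).le)]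
    calc ‖∮ z in C(c, r), f z‖ ≤ 2 * π * r * (C / r ^ 2) :=
          circleIntegral.norm_integral_le_of_norm_le_const hr0.le fun z hz => by
            rw [mem_sphere] at hz
            simpa [hz] using hbound z (hz ▸ (le_max_right _ _).trans hr)
      _ = 2 * π * C / r := by field_simp
  have hlim : Tendsto (fun r : ℝ => 2 * π * C / r) atTop (𝓝 0) :=
    tendsto_const_nhds.div_atTop tendsto_id
  exact norm_le_zero_iff.1 <| ge_of_tendsto hlim <| (eventually_ge_atTop _).mono hle

lemma circleIntegral_setIntegral_comm {α : Type*} [MeasureSpace α] [TopologicalSpace α]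
    [OpensMeasurableSpace α] [SecondCountableTopology α] [T2Space α]
    [SFinite (volume : Measure α)] [IsFiniteMeasureOnCompacts (volume : Measure α)]
    (hR : 0 ≤ R) {A : Set α} (hA : IsCompact A) {f : ℂ → α → ℂ}
    (hf : ContinuousOn (Function.uncurry f) (sphere c R ×ˢ Set.univ)) :
    (∮ z in C(c, R), ∫ x in A, f z x) = ∫ x in A, ∮ z in C(c, R), f z x := by
  set g : ℝ → α → ℂ := fun θ x => (circleMap 0 R θ * I) • f (circleMap c R θ) x
  have hg : Continuous (Function.uncurry g) := by
    have hf' : Continuous fun p : ℝ × α => f (circleMap c R p.1) p.2 :=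
      hf.comp_continuous (f := fun p : ℝ × α => (circleMap c R p.1, p.2)) (by fun_prop)
        fun p => ⟨circleMap_mem_sphere c hR p.1, trivial⟩
    exact (by fun_prop : Continuous fun p : ℝ × α => circleMap 0 R p.1 * I).smul hf'
  have hint : Integrable (Function.uncurry g)
      ((volume.restrict (Set.uIoc 0 (2 * π))).prod (volume.restrict A)) := by
    rw [Measure.prod_restrict]
    exact (hg.continuousOn.integrableOn_compact (isCompact_uIcc.prod hA)).mono_set
      (Set.prod_mono Set.uIoc_subset_uIcc le_rfl)
  simp only [circleIntegral, deriv_circleMap, ← integral_smul]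
  exact intervalIntegral_integral_swap hint

lemma circleIntegral_exp_mul_I_div_sub (τ : ℝ) {w : ℂ} (hw : w ∈ ball c R) :
    (∮ z in C(c, R), exp (-(I * z * τ)) * (I / (z - w))) = -(2 * π) * exp (-(I * w * τ)) := by
  have hf : DiffContOnCl ℂ (fun z => I * exp (-(I * z * τ))) (ball c R) :=
    Differentiable.diffContOnCl (by fun_prop)
  have hint : (fun z => exp (-(I * z * τ)) * (I / (z - w))) =
      fun z => (z - w)⁻¹ • (I * exp (-(I * z * τ))) := by
    ext z
    rw [smul_eq_mul, div_eq_mul_inv]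
    ring
  rw [hint, hf.circleIntegral_sub_inv_smul hw, smul_eq_mul]
  linear_combination (2 * π * exp (-(I * w * τ))) * I_sq

lemma integral_exp_mul_exp_sub {τ : ℝ} (hτ : 0 ≤ τ) {δ z : ℂ} (hz : z ≠ δ) :
    ∫ u in Set.Icc 0 τ, exp (-(I * δ * u)) * exp (-(I * z * ((τ - u : ℝ) : ℂ))) =
      (exp (-(I * z * τ)) - exp (-(I * δ * τ))) * (I / (z - δ)) := by
  have hne : I * (z - δ) ≠ 0 := mul_ne_zero I_ne_zero (sub_ne_zero.2 hz)
  have hint (u : ℝ) : exp (-(I * δ * u)) * exp (-(I * z * ((τ - u : ℝ) : ℂ))) =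
      exp (-(I * z * τ)) * exp (I * (z - δ) * u) := by
    rw [← exp_add, ← exp_add]
    congr 1
    push_cast
    ring
  simp_rw [hint]
  rw [integral_Icc_eq_integral_Ioc, ← intervalIntegral.integral_of_le hτ,
    intervalIntegral.integral_const_mul, integral_exp_mul_complex hne, ofReal_zero, mul_zero,
    exp_zero]
  have hexp : exp (-(I * z * τ)) * exp (I * (z - δ) * τ) = exp (-(I * δ * τ)) := by
    rw [← exp_add]
    ring_nf
  have hI : I / (z - δ) = -(I * (z - δ))⁻¹ := by
    rw [mul_inv, inv_I]
    ring
  rw [hI, div_eq_mul_inv]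
  linear_combination (I * (z - δ))⁻¹ * hexp

lemma ne_of_mem_sphere_of_mem_ball {r : ℝ} {z w : ℂ} (hz : z ∈ sphere c r) (hw : w ∈ ball c R)
    (hRr : R ≤ r) : z ≠ w := by
  rintro rfl
  exact (mem_sphere.1 hz ▸ mem_ball.1 hw).not_ge hRr

lemma norm_I_div_sub_le {w z : ℂ} (hw : w ∈ ball c R) (hz : 2 * R ≤ dist z c) :
    ‖I / (z - w)‖ ≤ 2 / dist z c := by
  have hw' : dist w c < R := hw
  have hzw : dist z c / 2 ≤ dist z w := by linarith [dist_triangle z w c]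
  have hpos : 0 < dist z c / 2 := by linarith [dist_nonneg (x := w) (y := c)]
  rw [norm_div, Complex.norm_I, ← dist_eq_norm]
  calc 1 / dist z w ≤ 1 / (dist z c / 2) := one_div_le_one_div_of_le hpos hzw
    _ = 2 / dist z c := by field_simp

section Resolvent

variable {κ : Type*} [Fintype κ]

noncomputable def resolventProduct (γ0 : ℂ) (γ : κ → ℂ) (z : ℂ) : ℂ :=
  I / (z - γ0) * ∏ i, I / (z - γ i)

lemma resolventProduct_comp_equiv {κ' : Type*} [Fintype κ'] (e : κ' ≃ κ)
    (γ0 : ℂ) (γ : κ → ℂ) : resolventProduct γ0 (γ ∘ e) = resolventProduct γ0 γ := by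
  ext z
  simp only [resolventProduct, Function.comp_apply, e.prod_comp (fun i => I / (z - γ i))]

lemma resolventProduct_option (γ0 : ℂ) (γ : Option κ → ℂ) (z : ℂ) :
    resolventProduct γ0 γ z = I / (z - γ none) * resolventProduct γ0 (γ ∘ some) z := by
  simp only [resolventProduct, Fintype.prod_option, Function.comp_apply]
  ring

lemma differentiableAt_resolventProduct {γ0 z : ℂ} {γ : κ → ℂ} (h0 : z ≠ γ0)
    (h : ∀ i, z ≠ γ i) : DifferentiableAt ℂ (resolventProduct γ0 γ) z := by
  have hres {w : ℂ} (hw : z ≠ w) : DifferentiableAt ℂ (fun z => I / (z - w)) z :=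
    (differentiableAt_const _).div (differentiableAt_id.sub_const w) (sub_ne_zero.2 hw)
  exact (hres h0).mul (DifferentiableAt.fun_finsetProd fun i _ => hres (h i))

lemma continuousOn_resolventProduct {γ0 : ℂ} {γ : κ → ℂ} (h0 : γ0 ∈ ball c R)
    (h : ∀ i, γ i ∈ ball c R) : ContinuousOn (resolventProduct γ0 γ) (sphere c R) :=
  fun _ hz => (differentiableAt_resolventProduct (ne_of_mem_sphere_of_mem_ball hz h0 le_rfl)
    fun i => ne_of_mem_sphere_of_mem_ball hz (h i) le_rfl).continuousAt.continuousWithinAt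

lemma circleIntegral_resolventProduct_eq_zero [Nonempty κ] (hR : 0 < R) {γ0 : ℂ} {γ : κ → ℂ}
    (h0 : γ0 ∈ ball c R) (h : ∀ i, γ i ∈ ball c R) :
    (∮ z in C(c, R), resolventProduct γ0 γ z) = 0 := by
  refine circleIntegral_eq_zero_of_norm_le_div_sq (R₀ := max (2 * R) 2) (C := 4) hR
    (fun z hz => differentiableAt_resolventProduct
      (ne_of_mem_sphere_of_mem_ball (mem_sphere.2 rfl) h0 hz)
      fun i => ne_of_mem_sphere_of_mem_ball (mem_sphere.2 rfl) (h i) hz) fun z hz => ?_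
  set r := dist z c
  have hr2 : 2 ≤ r := (le_max_right _ _).trans hz
  have hbound {w : ℂ} (hw : w ∈ ball c R) : ‖I / (z - w)‖ ≤ 2 / r :=
    norm_I_div_sub_le hw ((le_max_left _ _).trans hz)
  have h2r : 0 ≤ 2 / r := by positivity
  have h2r1 : 2 / r ≤ 1 := (div_le_one (by linarith)).2 hr2
  calc ‖resolventProduct γ0 γ z‖ ≤ 2 / r * (2 / r) ^ Fintype.card κ := by
        rw [resolventProduct, norm_mul, norm_prod]
        gcongr
        · exact hbound h0
        · calc ∏ i, ‖I / (z - γ i)‖ ≤ ∏ _i : κ, 2 / r :=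
                Finset.prod_le_prod (fun _ _ => norm_nonneg _) fun i _ => hbound (h i)
            _ = (2 / r) ^ Fintype.card κ := by rw [Finset.prod_const, Finset.card_univ]
    _ ≤ 2 / r * (2 / r) := by
        gcongr
        exact pow_le_of_le_one h2r h2r1 Fintype.card_ne_zero
    _ = 4 / r ^ 2 := by ring

lemma circleIntegral_exp_mul_resolventProduct_option (hR : 0 < R) {γ0 : ℂ}
    (h0 : γ0 ∈ ball c R) {τ : ℝ} (hτ : 0 ≤ τ) (γ : Option κ → ℂ) (hγ : ∀ i, γ i ∈ ball c R) :
    (∮ z in C(c, R), exp (-(I * z * τ)) * resolventProduct γ0 γ z) =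
      ∮ z in C(c, R), ∫ u in Set.Icc 0 τ, exp (-(I * γ none * u)) *
        exp (-(I * z * ((τ - u : ℝ) : ℂ))) * resolventProduct γ0 (γ ∘ some) z := by
  have hQ := continuousOn_resolventProduct h0 hγ
  calc (∮ z in C(c, R), exp (-(I * z * τ)) * resolventProduct γ0 γ z)
      = ∮ z in C(c, R), (exp (-(I * z * τ)) - exp (-(I * γ none * τ))) *
          resolventProduct γ0 γ z := by
        simp_rw [sub_mul]
        rw [circleIntegral.integral_sub
            (((Continuous.continuousOn (by fun_prop)).fun_mul hQ).circleIntegrable hR.le)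
            ((continuousOn_const.fun_mul hQ).circleIntegrable hR.le),
          circleIntegral.integral_const_mul, circleIntegral_resolventProduct_eq_zero hR h0 hγ,
          mul_zero, sub_zero]
    _ = _ := by
        refine circleIntegral.integral_congr hR.le fun z hz => ?_
        rw [integral_mul_const, integral_exp_mul_exp_sub hτ
          (ne_of_mem_sphere_of_mem_ball hz (hγ none) le_rfl), resolventProduct_option]
        ring

theorem circleIntegral_exp_mul_resolventProduct (hR : 0 < R)
    {γ0 : ℂ} (h0 : γ0 ∈ ball c R) {τ : ℝ} (hτ : 0 ≤ τ) (γ : κ → ℂ) (hγ : ∀ i, γ i ∈ ball c R) :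
    (∮ z in C(c, R), exp (-(I * z * τ)) * resolventProduct γ0 γ z) =
      -(2 * π) * phaseIntegral τ γ0 γ := by
  refine Fintype.induction_empty_option (P := fun κ _ => ∀ τ : ℝ, 0 ≤ τ → ∀ γ : κ → ℂ,
    (∀ i, γ i ∈ ball c R) → (∮ z in C(c, R), exp (-(I * z * τ)) * resolventProduct γ0 γ z) =
      -(2 * π) * phaseIntegral τ γ0 γ) ?_ ?_ ?_ κ τ hτ γ hγ
  · intro α β _ e ih τ hτ γ hγ
    let := Fintype.ofEquiv β e.symm
    rw [← resolventProduct_comp_equiv e, ih τ hτ (γ ∘ e) fun i => hγ (e i),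
      phaseIntegral_comp_equiv]
  · intro τ hτ γ _
    simp only [resolventProduct, Finset.univ_eq_empty, Finset.prod_empty, mul_one,
      circleIntegral_exp_mul_I_div_sub τ h0, phaseIntegral_of_isEmpty hτ]
  · intro α _ ih τ hτ γ hγ
    calc (∮ z in C(c, R), exp (-(I * z * τ)) * resolventProduct γ0 γ z)
        = ∫ u in Set.Icc 0 τ, ∮ z in C(c, R), exp (-(I * γ none * u)) *
            exp (-(I * z * ((τ - u : ℝ) : ℂ))) * resolventProduct γ0 (γ ∘ some) z := by
          rw [circleIntegral_exp_mul_resolventProduct_option hR h0 hτ γ hγ]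
          exact circleIntegral_setIntegral_comm hR.le isCompact_Icc <|
            (Continuous.continuousOn (by fun_prop)).mul
              ((continuousOn_resolventProduct h0 fun i => hγ (some i)).comp continuousOn_fst
                fun _ hp => hp.1)
      _ = ∫ u in Set.Icc 0 τ, exp (-(I * γ none * u)) *
            (-(2 * π) * phaseIntegral (τ - u) γ0 (γ ∘ some)) := by
          refine setIntegral_congr_fun measurableSet_Icc fun u hu => ?_
          have hih := ih (τ - u) (sub_nonneg.2 hu.2) (γ ∘ some) fun i => hγ (some i)
          simp only [mul_assoc, circleIntegral.integral_const_mul] at hih ⊢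
          rw [hih]
      _ = -(2 * π) * phaseIntegral τ γ0 γ := by
          rw [phaseIntegral_option, ← integral_const_mul]
          simp only [mul_left_comm]

end Resolvent

end Contour

theorem phaseIntegral_sum_elim_eq_circleIntegral {κ₁ κ₂ : Type*} [Fintype κ₁] [Fintype κ₂]
    {c : ℂ} {R : ℝ} (hR : 0 < R) (t : ℝ) {γ0 : ℂ} (h0 : γ0 ∈ ball c R) {γ1 : κ₁ → ℂ}
    (h1 : ∀ i, γ1 i ∈ ball c R) (γ2 : κ₂ → ℂ) :
    phaseIntegral t γ0 (Sum.elim γ1 γ2) =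
      -(1 / (2 * π)) * ∮ z in C(c, R), phaseIntegral t z γ2 * resolventProduct γ0 γ1 z := by
  have hswap : (∮ z in C(c, R), phaseIntegral t z γ2 * resolventProduct γ0 γ1 z) =
      -(2 * π) * phaseIntegral t γ0 (Sum.elim γ1 γ2) :=
    calc (∮ z in C(c, R), phaseIntegral t z γ2 * resolventProduct γ0 γ1 z)
        = ∮ z in C(c, R), ∫ v in timeSimplex κ₂ t,
            phaseIntegrand t z γ2 v * resolventProduct γ0 γ1 z := by
          simp only [phaseIntegral, integral_mul_const]
      _ = ∫ v in timeSimplex κ₂ t, ∮ z in C(c, R),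
            phaseIntegrand t z γ2 v * resolventProduct γ0 γ1 z :=
          circleIntegral_setIntegral_comm hR.le (isCompact_timeSimplex t) <|
            (Continuous.continuousOn (by unfold phaseIntegrand; fun_prop)).mul
              ((continuousOn_resolventProduct h0 h1).comp continuousOn_fst fun _ hp => hp.1)
      _ = ∫ v in timeSimplex κ₂ t, (∏ i, exp (-(I * γ2 i * (v i : ℂ)))) *
            (-(2 * π) * phaseIntegral (t - ∑ i, v i) γ0 γ1) := by
          refine setIntegral_congr_fun (measurableSet_timeSimplex t) fun v hv => ?_
          have hcore := circleIntegral_exp_mul_resolventProduct hR h0 (sub_nonneg.2 hv.2) γ1 h1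
          simp only [phaseIntegrand, mul_assoc, circleIntegral.integral_const_mul] at hcore ⊢
          rw [hcore]
      _ = -(2 * π) * phaseIntegral t γ0 (Sum.elim γ1 γ2) := by
          rw [phaseIntegral_sum_elim, ← integral_const_mul]
          simp only [mul_left_comm]
  have hπ : (π : ℂ) ≠ 0 := ofReal_ne_zero.2 Real.pi_ne_zero
  rw [hswap]
  field_simp

theorem stmt_6_general (a m : ℕ) (t : ℝ)
    (γA : Fin (a + 1) → ℂ) (γC : Fin m → ℂ)
    (D : Set ℂ)
    (hγA : ∀ i, γA i ∈ D)
    (c : ℂ) (R : ℝ) (hR : 0 < R) (hDR : D ⊆ Metric.ball c R) :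
    simplexIntegral (Sum.inl 0 : Sum (Fin (a + 1)) (Fin m)) t (Sum.elim γA γC)
      = -(1 / (2 * (π : ℂ))) *
          ∮ z in C(c, R),
            simplexIntegral (none : Option (Fin m)) t (fun o => o.elim z γC) *
              ∏ i, (I / (z - γA i)) := by
  have hA (i : Fin (a + 1)) : γA i ∈ ball c R := hDR (hγA i)
  rw [simplexIntegral_sum_inl, phaseIntegral_sum_elim_eq_circleIntegral hR t (hA 0)
    (γ1 := fun i : {i : Fin (a + 1) // i ≠ 0} => γA i) fun i => hA i]
  congr 2 with z
  rw [simplexIntegral_none, resolventProduct,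
    ← Fintype.prod_eq_mul_prod_subtype_ne (fun i => I / (z - γA i))]
  rfl

/-- From phases to resolvents.  For `t > 0`, an index set
`I = A ⊔ Aᶜ` with `A` nonempty (`|A| = a+1`, `|Aᶜ| = m`), phases `γ` in a compact set
`D ⊂ ℂ`, and any (circular) contour going once anticlockwise around `D`:
`∫_{(ℝ₊)^I} ds δ(t-Σsⱼ) Π e^{-iγⱼsⱼ}
  = -∮ dz/2π [∫_{(ℝ₊)^{Aᶜ∪{J}}} ds δ(t-Σsⱼ) Π e^{-iγⱼsⱼ}]|_{γ_J=z} Π_{j∈A} i/(z-γⱼ)`,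
where the auxiliary label `J` is modelled by `none : Option (Fin m)`. -/
theorem stmt_6 (a m : ℕ) (t : ℝ) (ht : 0 < t)
    (γA : Fin (a + 1) → ℂ) (γC : Fin m → ℂ)
    (D : Set ℂ) (hD : IsCompact D)
    (hγA : ∀ i, γA i ∈ D) (hγC : ∀ i, γC i ∈ D)
    (c : ℂ) (R : ℝ) (hR : 0 < R) (hDR : D ⊆ Metric.ball c R) :
    simplexIntegral (Sum.inl 0 : Sum (Fin (a + 1)) (Fin m)) t (Sum.elim γA γC)
      = -(1 / (2 * (π : ℂ))) *
          ∮ z in C(c, R),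
            simplexIntegral (none : Option (Fin m)) t (fun o => o.elim z γC) *
              ∏ i, (I / (z - γA i)) :=
  stmt_6_general a m t γA γC D hγA c R hR hDR
end

section
/- Consider a relevant momentum graph (one whose amplitude is nonzero) built via the iterative cluster scheme, with $N = n + n'$ interaction vertices of which $n_j$ have degree $j \in \{0,1,2\}$, and cluster decomposition $S$ with all clusters of even size. Set $r = N + 1 - |S|$. Then: (i) $n_2 - n_0 = r$; (ii) $n_0 = \frac{1}{2}(N - r - n_1)$; (iii) $0 \le n_0 \le \lfloor (N-r)/2 \rfloor$; (iv) the number $n_{np}$ of clusters of size greater than 2 satisfies $n_{np} \le r \le N$; and (v) $r = 0$ if and only if $S$ is a pairing (all clusters have size 2). -/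
/-!
Each merge replaces `3 - deg v` clusters by one, so the number of clusters drops by
`2 - deg v`. Telescoping from `|S|` clusters down to the single top cluster gives
`|S| + n₁ + 2 n₂ = 2N + 1`, which together with `n₀ + n₁ + n₂ = N` yields (i)–(iii).
Since the cluster sizes are even and positive, `2N + 2 = ∑ S ≥ 2|S| + 2 n_np`, with equality
exactly for pairings; this gives (iv) and (v).
-/

open Finset

lemma eq_add_sum_of_forall_succ_eq_add {G : Type*} [AddCommGroup G] {N : ℕ} (c : ℕ → G)
    (e : Fin N → G) (hc : ∀ j : Fin N, c (j + 1) = c j + e j) : c N = c 0 + ∑ j, e j := by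
  have : ∑ j : Fin N, e j = ∑ j ∈ range N, (c (j + 1) - c j) := by
    rw [← Fin.sum_univ_eq_sum_range]
    exact sum_congr rfl fun j _ => by rw [hc j, add_sub_cancel_left]
  rw [this, sum_range_sub, add_sub_cancel]

lemma Multiset.card_sub_add_singleton_add_card {α : Type*} [DecidableEq α] {m t : Multiset α}
    (ht : t ≤ m) (x : α) : (m - t + {x}).card + t.card = m.card + 1 := by
  have := Multiset.card_le_card ht
  rw [Multiset.card_add, Multiset.card_sub ht, Multiset.card_singleton]
  omega

lemma sum_eq_card_filter_eq_one_add_two_mul {ι : Type*} (s : Finset ι) (f : ι → ℕ)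
    (hf : ∀ i ∈ s, f i ≤ 2) :
    ∑ i ∈ s, f i = #(s.filter (f · = 1)) + 2 * #(s.filter (f · = 2)) := by
  rw [card_filter, card_filter, mul_sum, ← sum_add_distrib]
  refine sum_congr rfl fun i hi => ?_
  have := hf i hi
  split_ifs <;> omega

lemma card_eq_card_filter_eq_zero_add_one_add_two {ι : Type*} (s : Finset ι) (f : ι → ℕ)
    (hf : ∀ i ∈ s, f i ≤ 2) :
    #s = #(s.filter (f · = 0)) + #(s.filter (f · = 1)) + #(s.filter (f · = 2)) := by
  rw [card_eq_sum_ones, card_filter, card_filter, card_filter, ← sum_add_distrib,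
    ← sum_add_distrib]
  refine sum_congr rfl fun i hi => ?_
  have := hf i hi
  split_ifs <;> omega

lemma Multiset.two_mul_card_add_two_mul_card_filter_lt_le_sum (S : Multiset ℕ)
    (hSeven : ∀ a ∈ S, Even a) (hSpos : ∀ a ∈ S, 0 < a) :
    2 * S.card + 2 * (S.filter (2 < ·)).card ≤ S.sum := by
  induction S using Multiset.induction_on with
  | empty => simp
  | cons a S ih =>
    simp only [Multiset.mem_cons, forall_eq_or_imp] at hSeven hSpos
    obtain ⟨⟨b, rfl⟩, hSeven⟩ := hSeven
    have := ih hSeven hSpos.2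
    rw [Multiset.filter_cons]
    split_ifs <;> simp <;> omega

lemma Multiset.forall_eq_two_iff_sum_eq (S : Multiset ℕ)
    (hSeven : ∀ a ∈ S, Even a) (hSpos : ∀ a ∈ S, 0 < a) :
    (∀ a ∈ S, a = 2) ↔ S.sum = 2 * S.card := by
  refine ⟨fun h => ?_, fun h a ha => ?_⟩
  · rw [Multiset.eq_replicate_card.mpr h, Multiset.sum_replicate, Multiset.card_replicate,
      smul_eq_mul, mul_comm]
  · have hle := S.two_mul_card_add_two_mul_card_filter_lt_le_sum hSeven hSpos
    have hnp : S.filter (2 < ·) = 0 := Multiset.card_eq_zero.mp (by omega)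
    have hnot : ¬ 2 < a := Multiset.filter_eq_nil.mp hnp a ha
    obtain ⟨b, rfl⟩ := hSeven a ha
    have := hSpos _ ha
    omega

/-- identities of the iterative cluster scheme.  A relevant momentum graph
with `N = n + n'` interaction vertices of degrees `deg j ∈ {0,1,2}` and cluster
decomposition `S` (a multiset of even positive cluster sizes with total size `2N+2`) is
processed bottom-to-top: at step `j` a sub-multiset `t` of the current cluster sizes with
`|t| = 3 - deg j` clusters (jointly containing the three fused edges, so `t.sum ≥ 3`) is
merged into a single cluster of size `t.sum - 2`; at the top a single cluster of size `2`
remains.  Writing `n_i` for the number of vertices of degree `i` and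
`r = N + 1 - |S|`, one has: (i) `n₂ - n₀ = r`; (ii) `2n₀ = N - r - n₁`;
(iii) `2n₀ ≤ N - r` (i.e. `n₀ ≤ ⌊(N-r)/2⌋`); (iv) `n_np ≤ r ≤ N`, where `n_np` is the
number of clusters of size `> 2`; (v) `r = 0` iff `S` is a pairing. -/
theorem stmt_13 (N : ℕ) (S : Multiset ℕ)
    (hSeven : ∀ a ∈ S, Even a) (hSpos : ∀ a ∈ S, 0 < a)
    (hSsum : S.sum = 2 * N + 2)
    (deg : Fin N → ℕ) (hdeg : ∀ j, deg j ≤ 2)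
    (ms : ℕ → Multiset ℕ) (hms0 : ms 0 = S) (hmsN : ms N = {2})
    (hstep : ∀ j : Fin N, ∃ t : Multiset ℕ,
      t ≤ ms (j : ℕ) ∧ t.card = 3 - deg j ∧ 3 ≤ t.sum ∧
      ms ((j : ℕ) + 1) = (ms (j : ℕ) - t) + {t.sum - 2}) :
    ((univ.filter fun j => deg j = 2).card : ℤ) - ((univ.filter fun j => deg j = 0).card : ℤ)
        = (N : ℤ) + 1 - (S.card : ℤ)
    ∧ 2 * ((univ.filter fun j => deg j = 0).card : ℤ)
        = (N : ℤ) - ((N : ℤ) + 1 - (S.card : ℤ)) - ((univ.filter fun j => deg j = 1).card : ℤ)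
    ∧ 2 * ((univ.filter fun j => deg j = 0).card : ℤ) ≤ (N : ℤ) - ((N : ℤ) + 1 - (S.card : ℤ))
    ∧ ((S.filter fun a => 2 < a).card : ℤ) ≤ (N : ℤ) + 1 - (S.card : ℤ)
    ∧ (N : ℤ) + 1 - (S.card : ℤ) ≤ (N : ℤ)
    ∧ ((N : ℤ) + 1 - (S.card : ℤ) = 0 ↔ ∀ a ∈ S, a = 2) := by
  have hmerge : ∀ j : Fin N, ((ms (j + 1)).card : ℤ) = (ms j).card + ((deg j : ℤ) - 2) := by
    intro j
    obtain ⟨t, ht, htcard, -, heq⟩ := hstep j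
    have := Multiset.card_sub_add_singleton_add_card ht (t.sum - 2)
    have := hdeg j
    rw [heq]
    omega
  have hdegsum := sum_eq_card_filter_eq_one_add_two_mul univ deg fun j _ => hdeg j
  have htelescope := eq_add_sum_of_forall_succ_eq_add (fun k => ((ms k).card : ℤ)) _ hmerge
  simp only [hmsN, hms0, Multiset.card_singleton, sum_sub_distrib, sum_const, card_univ,
    Fintype.card_fin, nsmul_eq_mul, ← Nat.cast_sum, hdegsum] at htelescope
  have hN := card_eq_card_filter_eq_zero_add_one_add_two univ deg fun j _ => hdeg j
  rw [card_univ, Fintype.card_fin] at hN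
  have hSlower := S.two_mul_card_add_two_mul_card_filter_lt_le_sum hSeven hSpos
  have hScard : 0 < S.card := Multiset.card_pos.mpr (by rintro rfl; simp at hSsum)
  rw [S.forall_eq_two_iff_sum_eq hSeven hSpos]
  refine ⟨?_, ?_, ?_, ?_, ?_, ?_⟩ <;> omega
end

section
/- Let $0 < \lambda < 1$, let $a_0 > 0$, and define $N_0(\lambda) = \max\big(1, \lfloor a_0|\ln\lambda| / \ln\langle\ln\lambda\rangle \rfloor\big)$ where $\langle x\rangle = \sqrt{1+x^2}$. Then as $\lambda \to 0^+$: (i) $N_0(\lambda) \to \infty$; (ii) $N_0 \ln\langle\ln\lambda\rangle / |\ln\lambda| \to a_0$; (iii) $N_0 \ln N_0 / |\ln\lambda| \to a_0$. Consequently, for constants $c, c' \ge 0$, $n_1, n_2, n_3 \in \mathbb{N}$, $p_1, p_2 \in \mathbb{R}$ satisfying $p_1 - a_0(p_2 + n_1 n_2 + n_3) > 0$, the expression $c^{N_0}\,\lambda^{p_1}\,N_0^{p_2 N_0 + c'}\,((n_1 N_0)!)^{n_2}\,\langle\ln\lambda\rangle^{n_3 N_0 + c'}$ tends to $0$ as $\lambda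 \to 0^+$. -/
/-!
Put `t = |ln λ| → ∞` and `φ(t) = a₀ t / ln⟨t⟩`. Since `ln⟨t⟩ = ln t + o(1) = o(t)`, `φ → ∞` and
`N₀ = ⌊φ⌋` eventually, so `N₀ / φ → 1`; this is (i) and (ii). Taking logarithms,
`ln N₀ = ln a₀ + ln t - ln ln⟨t⟩ + o(1) = (1 + o(1)) ln⟨t⟩`, which turns (ii) into (iii).
For the last claim bound `m! ≤ m^m`: the logarithm of the resulting majorant, divided by `t`,
tends to `a₀(p₂ + n₁n₂ + n₃) - p₁ < 0` by (ii), (iii) and `N₀ / t, ln N₀ / t, ln⟨t⟩ / t → 0`.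
-/

open Filter
open scoped Topology

/-- The Japanese bracket `⟨x⟩ = √(1+x²)`. -/
noncomputable def jbr (x : ℝ) : ℝ := Real.sqrt (1 + x ^ 2)

/-- The number of Duhamel iterations `N₀(λ) = max(1, ⌊a₀|ln λ| / ln⟨ln λ⟩⌋)`. -/
noncomputable def Nzero (a0 lam : ℝ) : ℕ :=
  max 1 (⌊a0 * |Real.log lam| / Real.log (jbr (Real.log lam))⌋.toNat)

open Real

lemma pow_le_exp_mul_log {c : ℝ} (hc : 0 ≤ c) (n : ℕ) : c ^ n ≤ exp (n * log c) := by
  rcases hc.eq_or_lt with rfl | hc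
  · cases n <;> simp
  · rw [← rpow_natCast, rpow_def_of_pos hc, mul_comm]

lemma factorial_le_exp_mul_log (m : ℕ) : (m.factorial : ℝ) ≤ exp (m * log m) :=
  calc (m.factorial : ℝ) ≤ (m : ℝ) ^ m := by exact_mod_cast m.factorial_le_pow
    _ ≤ exp (m * log m) := pow_le_exp_mul_log m.cast_nonneg m

lemma tendsto_abs_log_nhdsGT_zero : Tendsto (fun lam => |log lam|) (𝓝[>] 0) atTop :=
  tendsto_abs_atBot_atTop.comp tendsto_log_nhdsGT_zero

lemma tendsto_zero_of_le_exp {α : Type*} {l : Filter α} {f T : α → ℝ} {G : ℝ → ℝ} {L : ℝ}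
    (hT : Tendsto T l atTop) (hL : L < 0) (hG : Tendsto (fun t => G t / t) atTop (𝓝 L))
    (hf0 : ∀ᶠ x in l, 0 ≤ f x) (hf : ∀ᶠ x in l, f x ≤ exp (G (T x))) : Tendsto f l (𝓝 0) := by
  have hGbot : Tendsto G atTop atBot := by
    refine (tendsto_id.atTop_mul_neg hL hG).congr' ?_
    filter_upwards [eventually_ne_atTop 0] with t ht
    exact mul_div_cancel₀ (G t) ht
  exact squeeze_zero' hf0 hf (tendsto_exp_atBot.comp (hGbot.comp hT))

lemma jbr_abs (x : ℝ) : jbr |x| = jbr x := by simp [jbr, sq_abs]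

lemma jbr_pos (x : ℝ) : 0 < jbr x := by unfold jbr; positivity

lemma le_jbr (x : ℝ) : x ≤ jbr x :=
  calc x ≤ |x| := le_abs_self x
    _ = √(x ^ 2) := (sqrt_sq_eq_abs x).symm
    _ ≤ jbr x := sqrt_le_sqrt (by linarith)

lemma jbr_eq_mul_sqrt {t : ℝ} (ht : 0 < t) : jbr t = t * √(1 + t⁻¹ ^ 2) := by
  rw [jbr, ← sqrt_sq ht.le, ← sqrt_mul (sq_nonneg t), sqrt_sq ht.le]
  congr 1
  field_simp
  ring

lemma log_jbr_pos {t : ℝ} (ht : t ≠ 0) : 0 < log (jbr t) :=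
  log_pos <| (lt_sqrt zero_le_one).2 (by nlinarith [sq_pos_of_ne_zero ht])

lemma tendsto_log_jbr_atTop : Tendsto (fun t => log (jbr t)) atTop atTop :=
  tendsto_log_atTop.comp (tendsto_atTop_mono le_jbr tendsto_id)

lemma tendsto_log_jbr_sub_log : Tendsto (fun t => log (jbr t) - log t) atTop (𝓝 0) := by
  have h := ((tendsto_inv_atTop_zero.pow 2).const_add 1).sqrt.log (by norm_num)
  simp only [ne_eq, OfNat.ofNat_ne_zero, not_false_eq_true, zero_pow, add_zero, sqrt_one,
    log_one] at h
  refine h.congr' ?_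
  filter_upwards [eventually_gt_atTop 0] with t ht
  rw [jbr_eq_mul_sqrt ht, log_mul ht.ne' (by positivity)]
  ring

lemma tendsto_log_jbr_div_self : Tendsto (fun t => log (jbr t) / t) atTop (𝓝 0) := by
  have h := (tendsto_log_jbr_sub_log.div_atTop tendsto_id).add
    isLittleO_log_id_atTop.tendsto_div_nhds_zero
  rw [zero_add] at h
  exact h.congr fun t => by simp only [id]; ring

lemma tendsto_log_div_log_jbr : Tendsto (fun t => log t / log (jbr t)) atTop (𝓝 1) := by
  have h := tendsto_const_nhds (x := (1 : ℝ)) |>.sub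
    (tendsto_log_jbr_sub_log.div_atTop tendsto_log_jbr_atTop)
  rw [sub_zero] at h
  refine h.congr' ?_
  filter_upwards [eventually_gt_atTop 0] with t ht
  have := (log_jbr_pos ht.ne').ne'
  field_simp
  ring

noncomputable def nIter (a0 t : ℝ) : ℕ := max 1 ⌊a0 * t / log (jbr t)⌋₊

lemma Nzero_eq_nIter (a0 lam : ℝ) : Nzero a0 lam = nIter a0 |log lam| := by
  simp [Nzero, nIter, jbr_abs, Int.floor_toNat]

lemma one_le_nIter (a0 t : ℝ) : 1 ≤ nIter a0 t := le_max_left _ _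

section
variable {a0 : ℝ}

lemma tendsto_mul_div_log_jbr (ha0 : 0 < a0) :
    Tendsto (fun t => a0 * t / log (jbr t)) atTop atTop := by
  have h : Tendsto (fun t => log (jbr t) / t) atTop (𝓝[>] 0) :=
    tendsto_nhdsWithin_iff.2 ⟨tendsto_log_jbr_div_self, by
      filter_upwards [eventually_gt_atTop 0] with t ht using div_pos (log_jbr_pos ht.ne') ht⟩
  refine ((tendsto_inv_nhdsGT_zero.comp h).const_mul_atTop ha0).congr fun t => ?_
  rw [Function.comp_apply, inv_div, mul_div_assoc]

lemma nIter_eventually_eq_floor (ha0 : 0 < a0) :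
    ∀ᶠ t in atTop, nIter a0 t = ⌊a0 * t / log (jbr t)⌋₊ := by
  filter_upwards [(tendsto_mul_div_log_jbr ha0).eventually_ge_atTop 1] with t ht
  exact max_eq_right ((Nat.one_le_floor_iff _).2 ht)

lemma tendsto_nIter_atTop (ha0 : 0 < a0) : Tendsto (nIter a0) atTop atTop :=
  (tendsto_nat_floor_atTop.comp (tendsto_mul_div_log_jbr ha0)).congr' <| by
    filter_upwards [nIter_eventually_eq_floor ha0] with t ht using ht.symm

lemma tendsto_nIter_div (ha0 : 0 < a0) :
    Tendsto (fun t => (nIter a0 t : ℝ) / (a0 * t / log (jbr t))) atTop (𝓝 1) :=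
  (tendsto_nat_floor_div_atTop.comp (tendsto_mul_div_log_jbr ha0)).congr' <| by
    filter_upwards [nIter_eventually_eq_floor ha0] with t ht
    simp [ht]

lemma tendsto_nIter_mul_log_jbr_div (ha0 : 0 < a0) :
    Tendsto (fun t => nIter a0 t * log (jbr t) / t) atTop (𝓝 a0) := by
  have h := (tendsto_nIter_div ha0).mul_const a0
  rw [one_mul] at h
  refine h.congr' ?_
  filter_upwards [eventually_gt_atTop 0] with t ht
  have := (log_jbr_pos ht.ne').ne'
  field_simp

-- `log N₀ = log (N₀ / φ) + log a₀ + log t - log log ⟨t⟩` with `φ = a₀ t / log ⟨t⟩` and `N₀ / φ → 1`.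
lemma tendsto_log_nIter_div_log_jbr (ha0 : 0 < a0) :
    Tendsto (fun t => log (nIter a0 t) / log (jbr t)) atTop (𝓝 1) := by
  have hratio := ((tendsto_nIter_div ha0).log one_ne_zero).div_atTop tendsto_log_jbr_atTop
  have hconst := (tendsto_const_nhds (x := log a0)).div_atTop tendsto_log_jbr_atTop
  have hloglog := isLittleO_log_id_atTop.tendsto_div_nhds_zero.comp tendsto_log_jbr_atTop
  have h := ((hratio.add hconst).add tendsto_log_div_log_jbr).sub hloglog
  rw [zero_add, zero_add, sub_zero] at h
  refine h.congr' ?_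
  filter_upwards [eventually_gt_atTop 0] with t ht
  have hlog := log_jbr_pos ht.ne'
  have hN : (0 : ℝ) < nIter a0 t := by exact_mod_cast one_le_nIter a0 t
  simp only [Function.comp_apply, id]
  rw [log_div hN.ne' (by positivity), log_div (by positivity) hlog.ne', log_mul ha0.ne' ht.ne']
  ring

lemma tendsto_nIter_mul_log_nIter_div (ha0 : 0 < a0) :
    Tendsto (fun t => nIter a0 t * log (nIter a0 t) / t) atTop (𝓝 a0) := by
  have h := (tendsto_nIter_mul_log_jbr_div ha0).mul (tendsto_log_nIter_div_log_jbr ha0)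
  rw [mul_one] at h
  refine h.congr' ?_
  filter_upwards [eventually_gt_atTop 0] with t ht
  have := (log_jbr_pos ht.ne').ne'
  field_simp

lemma tendsto_nIter_div_self (ha0 : 0 < a0) :
    Tendsto (fun t => (nIter a0 t : ℝ) / t) atTop (𝓝 0) := by
  refine ((tendsto_nIter_mul_log_jbr_div ha0).div_atTop tendsto_log_jbr_atTop).congr' ?_
  filter_upwards [eventually_gt_atTop 0] with t ht
  have := (log_jbr_pos ht.ne').ne'
  field_simp

lemma tendsto_log_nIter_div_self (ha0 : 0 < a0) :
    Tendsto (fun t => log (nIter a0 t) / t) atTop (𝓝 0) := by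
  have h := (tendsto_nIter_mul_log_nIter_div ha0).mul
    (tendsto_natCast_atTop_atTop.comp (tendsto_nIter_atTop ha0)).inv_tendsto_atTop
  rw [mul_zero] at h
  refine h.congr fun t => ?_
  have : (nIter a0 t : ℝ) ≠ 0 := by have := one_le_nIter a0 t; positivity
  simp only [Pi.inv_apply, Function.comp_apply]
  field_simp

/-- The logarithm of the majorant of `c^N λ^{p₁} N^{p₂N+c'} ((n₁N)!)^{n₂} ⟨ln λ⟩^{n₃N+c'}`
obtained from `m! ≤ m^m`, written in `t = |ln λ|`. -/
noncomputable def logMajorant (c c' : ℝ) (n1 n2 n3 : ℕ) (p1 p2 N t : ℝ) : ℝ :=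
  N * log c - p1 * t + (p2 * N + c') * log N + n2 * (n1 * N * log (n1 * N)) +
    (n3 * N + c') * log (jbr t)

lemma expression_le_exp_logMajorant {c : ℝ} (hc : 0 ≤ c) (c' : ℝ) (n1 n2 n3 : ℕ)
    (p1 p2 : ℝ) {lam : ℝ} (hlam0 : 0 < lam) (hlam1 : lam < 1) :
    c ^ (Nzero a0 lam) * lam ^ p1 *
        (Nzero a0 lam : ℝ) ^ (p2 * (Nzero a0 lam : ℝ) + c') *
        ((Nat.factorial (n1 * Nzero a0 lam) : ℝ)) ^ n2 *
        (jbr (log lam)) ^ ((n3 : ℝ) * (Nzero a0 lam : ℝ) + c') ≤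
      exp (logMajorant c c' n1 n2 n3 p1 p2 (nIter a0 |log lam|) |log lam|) := by
  have hlog : log lam = -|log lam| := by rw [abs_of_neg (log_neg hlam0 hlam1), neg_neg]
  rw [Nzero_eq_nIter, ← jbr_abs]
  set t := |log lam|
  set N := nIter a0 t
  have hN : (0 : ℝ) < N := by exact_mod_cast one_le_nIter a0 t
  rw [rpow_def_of_pos hlam0, rpow_def_of_pos hN, rpow_def_of_pos (jbr_pos t), hlog]
  calc _ ≤ exp (N * log c) * exp (-t * p1) * exp (log N * (p2 * N + c')) *
        exp ((n1 * N : ℕ) * log (n1 * N : ℕ)) ^ n2 * exp (log (jbr t) * (n3 * N + c')) := by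
        gcongr
        · exact pow_le_exp_mul_log hc N
        · exact factorial_le_exp_mul_log _
    _ = _ := by
        rw [← exp_nat_mul, ← exp_add, ← exp_add, ← exp_add, ← exp_add, logMajorant]
        push_cast
        congr 1
        ring

lemma tendsto_logMajorant_div (ha0 : 0 < a0) (c c' : ℝ) (n1 n2 n3 : ℕ) (p1 p2 : ℝ) :
    Tendsto (fun t => logMajorant c c' n1 n2 n3 p1 p2 (nIter a0 t) t / t) atTop
      (𝓝 (a0 * (p2 + n1 * n2 + n3) - p1)) := by
  have hN := tendsto_nIter_div_self ha0
  have hNlogN := tendsto_nIter_mul_log_nIter_div ha0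
  have hlogN := tendsto_log_nIter_div_self ha0
  have hNlogJ := tendsto_nIter_mul_log_jbr_div ha0
  have hlogJ := tendsto_log_jbr_div_self
  have h := ((((hN.const_mul (log c)).sub (tendsto_const_nhds (x := p1))).add
    ((hNlogN.const_mul p2).add (hlogN.const_mul c'))).add
    (((hN.const_mul (log n1)).add hNlogN).const_mul ((n2 : ℝ) * n1))).add
    ((hNlogJ.const_mul (n3 : ℝ)).add (hlogJ.const_mul c'))
  rw [show log c * 0 - p1 + (p2 * a0 + c' * 0) + (n2 : ℝ) * n1 * (log n1 * 0 + a0) +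
    (n3 * a0 + c' * 0) = a0 * (p2 + n1 * n2 + n3) - p1 by ring] at h
  refine h.congr' ?_
  filter_upwards [eventually_gt_atTop 0] with t ht
  -- via `negMulLog`, to avoid a case distinction on `n₁ = 0`
  have hsplit : (n1 : ℝ) * nIter a0 t * log (n1 * nIter a0 t) =
      nIter a0 t * (n1 * log n1) + n1 * (nIter a0 t * log (nIter a0 t)) := by
    have := negMulLog_mul n1 (nIter a0 t)
    simp only [negMulLog] at this
    linarith
  rw [logMajorant, hsplit]
  field_simp

lemma tendsto_expression_nhdsGT_zero (ha0 : 0 < a0) {c : ℝ} (hc : 0 ≤ c) (c' : ℝ)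
    (n1 n2 n3 : ℕ) (p1 p2 : ℝ) (hp : 0 < p1 - a0 * (p2 + (n1 : ℝ) * (n2 : ℝ) + (n3 : ℝ))) :
    Tendsto (fun lam =>
        c ^ (Nzero a0 lam) * lam ^ p1 *
          (Nzero a0 lam : ℝ) ^ (p2 * (Nzero a0 lam : ℝ) + c') *
          ((Nat.factorial (n1 * Nzero a0 lam) : ℝ)) ^ n2 *
          (jbr (log lam)) ^ ((n3 : ℝ) * (Nzero a0 lam : ℝ) + c'))
      (𝓝[>] (0 : ℝ)) (𝓝 0) := by
  refine tendsto_zero_of_le_exp tendsto_abs_log_nhdsGT_zero (by linarith)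
    (tendsto_logMajorant_div ha0 c c' n1 n2 n3 p1 p2) ?_ ?_
  · filter_upwards [self_mem_nhdsWithin] with lam (hlam : 0 < lam)
    have := jbr_pos (log lam)
    positivity
  · filter_upwards [Ioo_mem_nhdsGT one_pos] with lam hlam
    exact expression_le_exp_logMajorant hc c' n1 n2 n3 p1 p2 hlam.1 hlam.2

end

/-- asymptotics of `N₀(λ)` as `λ → 0⁺`: (i) `N₀(λ) → ∞`;
(ii) `N₀ ln⟨ln λ⟩ / |ln λ| → a₀`; (iii) `N₀ ln N₀ / |ln λ| → a₀`; and consequently,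
for constants `c, c' ≥ 0`, `n₁,n₂,n₃ ∈ ℕ`, `p₁,p₂ ∈ ℝ` with
`p₁ - a₀(p₂ + n₁n₂ + n₃) > 0`, the expression
`c^{N₀} λ^{p₁} N₀^{p₂N₀+c'} ((n₁N₀)!)^{n₂} ⟨ln λ⟩^{n₃N₀+c'}` tends to `0`. -/
theorem stmt_15 (a0 : ℝ) (ha0 : 0 < a0) :
    Tendsto (fun lam => Nzero a0 lam) (𝓝[>] (0 : ℝ)) atTop
    ∧ Tendsto (fun lam => (Nzero a0 lam : ℝ) * Real.log (jbr (Real.log lam)) / |Real.log lam|)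
        (𝓝[>] (0 : ℝ)) (𝓝 a0)
    ∧ Tendsto (fun lam => (Nzero a0 lam : ℝ) * Real.log (Nzero a0 lam : ℝ) / |Real.log lam|)
        (𝓝[>] (0 : ℝ)) (𝓝 a0)
    ∧ ∀ (c c' : ℝ) (n1 n2 n3 : ℕ) (p1 p2 : ℝ),
        0 ≤ c → 0 ≤ c' →
        0 < p1 - a0 * (p2 + (n1 : ℝ) * (n2 : ℝ) + (n3 : ℝ)) →
        Tendsto (fun lam =>
            c ^ (Nzero a0 lam) * lam ^ p1 *
              (Nzero a0 lam : ℝ) ^ (p2 * (Nzero a0 lam : ℝ) + c') *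
              ((Nat.factorial (n1 * Nzero a0 lam) : ℝ)) ^ n2 *
              (jbr (Real.log lam)) ^ ((n3 : ℝ) * (Nzero a0 lam : ℝ) + c'))
          (𝓝[>] (0 : ℝ)) (𝓝 0) := by
  have hT := tendsto_abs_log_nhdsGT_zero
  refine ⟨?_, ?_, ?_, fun c c' n1 n2 n3 p1 p2 hc _ hp =>
    tendsto_expression_nhdsGT_zero ha0 hc c' n1 n2 n3 p1 p2 hp⟩
  · simpa only [Function.comp_def, Nzero_eq_nIter] using (tendsto_nIter_atTop ha0).comp hT
  · simpa only [Function.comp_def, Nzero_eq_nIter, jbr_abs] using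
      (tendsto_nIter_mul_log_jbr_div ha0).comp hT
  · simpa only [Function.comp_def, Nzero_eq_nIter] using
      (tendsto_nIter_mul_log_nIter_div ha0).comp hT
end
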